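/- arXiv:1912.08972 — 2 statements merged into one kernel-verified Lean document; each statement's English description precedes it below -/
import Mathlib

section
/- If λ is odd and k ≡ 2 or 3 (mod 4), then no set of k mutually orthogonal binary frequency squares of order 2λ satisfies a full relation. -/
/-- A binary frequency square of type F(n; n/2): an n×n {0,1}-matrix with
exactly n/2 ones in every row and every column. -/
def IsFreqSquare (n : ℕ) (F : Fin n → Fin n → Fin 2) : Prop :=
  (∀ r : Fin n, (Finset.univ.filter fun c => F r c = 1).card = n / 2) ∧
  (∀ c : Fin n, (Finset.univ.filter fun r => F r c = 1).card = n / 2)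

/-- Two binary frequency squares are orthogonal if each ordered pair of symbols
occurs exactly n^2/4 times when the squares are superimposed. -/
def OrthFS (n : ℕ) (F G : Fin n → Fin n → Fin 2) : Prop :=
  ∀ a b : Fin 2,
    (Finset.univ.filter fun p : Fin n × Fin n =>
      F p.1 p.2 = a ∧ G p.1 p.2 = b).card = n ^ 2 / 4

/-- A set of k mutually orthogonal binary frequency squares of order n. -/
def IsMOFS (n k : ℕ) (F : Fin k → Fin n → Fin n → Fin 2) : Prop :=
  (∀ i, IsFreqSquare n (F i)) ∧ ∀ i j, i ≠ j → OrthFS n (F i) (F j)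

/-- A full relation on a set of k binary frequency squares of order n:
a set X1 of rows and a set X2 of columns (with X_c = {1} for the symbol
columns) such that for every cell (r,c) the quantity
[r ∈ X1] + [c ∈ X2] + Σ_i F_i[r,c] is even. -/
def FullRelation (n k : ℕ) (F : Fin k → Fin n → Fin n → Fin 2)
    (X1 X2 : Finset (Fin n)) : Prop :=
  ∀ r c : Fin n,
    Even ((if r ∈ X1 then 1 else 0) + (if c ∈ X2 then 1 else 0) +
      ∑ i, (F i r c).val)

/-!
Write `S r c = ∑ i, F i r c`, `x r = [r ∈ X1]` and `y c = [c ∈ X2]`. Expanding `S²` and using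
that a square has `2λ²` ones and two orthogonal squares share `λ²` of them gives
`∑ S² = k (k + 1) λ²`. A full relation says `S ≡ x + y (mod 2)`, so `S² ≡ (x + y)² (mod 4)`, and
`∑ (x + y)² = 2λ |X1| + 2λ |X2| + 2 |X1| |X2|`. Each row and column of `S` sums to `kλ`, which
forces `|X1| ≡ |X2| ≡ k (mod 2)`. For odd `λ` the two sides are then `2` and `0` (mod 4) when
`k ≡ 2 (mod 4)`, and `0` and `2` when `k ≡ 3 (mod 4)`.
-/

lemma Fin.val_two_eq_ite (v : Fin 2) : v.val = if v = 1 then 1 else 0 := by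
  fin_cases v <;> rfl

lemma Fin.val_mul_val_two_eq_ite (u v : Fin 2) :
    u.val * v.val = if u = 1 ∧ v = 1 then 1 else 0 := by
  fin_cases u <;> fin_cases v <;> rfl

lemma Fin.val_two_sq (v : Fin 2) : v.val ^ 2 = v.val := by
  fin_cases v <;> rfl

theorem Nat.ModEq.sq_of_modEq_two {a b : ℕ} (h : a ≡ b [MOD 2]) : a ^ 2 ≡ b ^ 2 [MOD 4] := by
  rw [Nat.modEq_iff_dvd] at h ⊢
  obtain ⟨t, ht⟩ := h
  exact ⟨t * (a + t), by push_cast; linear_combination ((b : ℤ) + a + 2 * t) * ht⟩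

theorem sum_sum_sq_ite_mem_add_ite_mem {α β : Type*} [Fintype α] [Fintype β]
    [DecidableEq α] [DecidableEq β] (X1 : Finset α) (X2 : Finset β) :
    ∑ r, ∑ c, ((if r ∈ X1 then 1 else 0) + (if c ∈ X2 then 1 else 0)) ^ 2
      = Fintype.card β * X1.card + Fintype.card α * X2.card + 2 * X1.card * X2.card := by
  have hsq : ∀ (r : α) (c : β), ((if r ∈ X1 then 1 else 0) + (if c ∈ X2 then 1 else 0)) ^ 2
      = (if r ∈ X1 then 1 else 0) + (if c ∈ X2 then 1 else 0)
        + 2 * ((if r ∈ X1 then 1 else 0) * (if c ∈ X2 then 1 else 0)) := by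
    intro r c
    split_ifs <;> rfl
  simp only [hsq, Finset.sum_add_distrib, ← Finset.mul_sum, ← Finset.sum_mul, Finset.sum_const,
    Finset.sum_boole, Finset.card_univ, smul_eq_mul, Finset.filter_mem_eq_of_subset,
    Finset.subset_univ, Nat.cast_id]
  ring

section FreqSquare

variable {n : ℕ} {F G : Fin n → Fin n → Fin 2}

theorem IsFreqSquare.sum_row (hF : IsFreqSquare n F) (r : Fin n) : ∑ c, (F r c).val = n / 2 := by
  simp only [Fin.val_two_eq_ite, Finset.sum_boole]
  exact_mod_cast hF.1 r

theorem IsFreqSquare.sum_col (hF : IsFreqSquare n F) (c : Fin n) : ∑ r, (F r c).val = n / 2 := by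
  simp only [Fin.val_two_eq_ite, Finset.sum_boole]
  exact_mod_cast hF.2 c

theorem IsFreqSquare.sum_sum_sq (hF : IsFreqSquare n F) :
    ∑ r, ∑ c, (F r c).val ^ 2 = n * (n / 2) := by
  simp [Fin.val_two_sq, hF.sum_row]

theorem OrthFS.sum_sum_mul (h : OrthFS n F G) :
    ∑ r, ∑ c, (F r c).val * (G r c).val = n ^ 2 / 4 := by
  rw [← Fintype.sum_prod_type' (f := fun r c => (F r c).val * (G r c).val)]
  simp only [Fin.val_mul_val_two_eq_ite, Finset.sum_boole]
  exact_mod_cast h 1 1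

end FreqSquare

section MOFS

variable {n k : ℕ} {F : Fin k → Fin n → Fin n → Fin 2}

theorem IsMOFS.sum_sum_sq_sum (hF : IsMOFS n k F) :
    ∑ r, ∑ c, (∑ i, (F i r c).val) ^ 2 = k * (n * (n / 2)) + k * (k - 1) * (n ^ 2 / 4) := by
  have hsum_i : ∀ i, ∑ j, ∑ r, ∑ c, (F i r c).val * (F j r c).val
      = n * (n / 2) + (k - 1) * (n ^ 2 / 4) := by
    intro i
    rw [← Finset.add_sum_erase _ _ (Finset.mem_univ i),
      Finset.sum_congr rfl fun j hj => (hF.2 i j (Finset.ne_of_mem_erase hj).symm).sum_sum_mul]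
    simp [← sq, (hF.1 i).sum_sum_sq]
  calc ∑ r, ∑ c, (∑ i, (F i r c).val) ^ 2
      = ∑ i, ∑ j, ∑ r, ∑ c, (F i r c).val * (F j r c).val := by
        simp only [sq, Fintype.sum_mul_sum, Finset.sum_comm (γ := Fin n) (α := Fin k)]
    _ = k * (n * (n / 2)) + k * (k - 1) * (n ^ 2 / 4) := by
        simp only [hsum_i, Finset.sum_const, Finset.card_univ, Fintype.card_fin, smul_eq_mul]
        ring

end MOFS

namespace FullRelation

variable {n k : ℕ} {F : Fin k → Fin n → Fin n → Fin 2} {X1 X2 : Finset (Fin n)}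

theorem sum_modEq (h : FullRelation n k F X1 X2) (r c : Fin n) :
    ∑ i, (F i r c).val ≡ (if r ∈ X1 then 1 else 0) + (if c ∈ X2 then 1 else 0) [MOD 2] := by
  have := Nat.even_iff.mp (h r c)
  unfold Nat.ModEq
  omega

theorem sum_sum_sq_modEq (h : FullRelation n k F X1 X2) :
    ∑ r, ∑ c, (∑ i, (F i r c).val) ^ 2
      ≡ ∑ r, ∑ c, ((if r ∈ X1 then 1 else 0) + (if c ∈ X2 then 1 else 0)) ^ 2 [MOD 4] :=
  Nat.ModEq.sum fun r _ => Nat.ModEq.sum fun c _ => (h.sum_modEq r c).sq_of_modEq_two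

theorem mul_modEq_card_right (h : FullRelation n k F X1 X2) (hF : ∀ i, IsFreqSquare n (F i))
    (hn : Even n) (r : Fin n) : k * (n / 2) ≡ X2.card [MOD 2] :=
  calc k * (n / 2) = ∑ c, ∑ i, (F i r c).val := by
        simp [Finset.sum_comm (γ := Fin n), (hF _).sum_row]
    _ ≡ ∑ c, ((if r ∈ X1 then 1 else 0) + (if c ∈ X2 then 1 else 0)) [MOD 2] :=
        Nat.ModEq.sum fun c _ => h.sum_modEq r c
    _ = n * (if r ∈ X1 then 1 else 0) + X2.card := by simp [Finset.sum_add_distrib]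
    _ ≡ 0 + X2.card [MOD 2] := (Nat.modEq_zero_iff_dvd.2 (hn.two_dvd.mul_right _)).add_right _
    _ = X2.card := zero_add _

theorem mul_modEq_card_left (h : FullRelation n k F X1 X2) (hF : ∀ i, IsFreqSquare n (F i))
    (hn : Even n) (c : Fin n) : k * (n / 2) ≡ X1.card [MOD 2] :=
  calc k * (n / 2) = ∑ r, ∑ i, (F i r c).val := by
        simp [Finset.sum_comm (γ := Fin n), (hF _).sum_col]
    _ ≡ ∑ r, ((if r ∈ X1 then 1 else 0) + (if c ∈ X2 then 1 else 0)) [MOD 2] :=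
        Nat.ModEq.sum fun r _ => h.sum_modEq r c
    _ = X1.card + n * (if c ∈ X2 then 1 else 0) := by simp [Finset.sum_add_distrib]
    _ ≡ X1.card + 0 [MOD 2] := (Nat.modEq_zero_iff_dvd.2 (hn.two_dvd.mul_right _)).add_left _
    _ = X1.card := add_zero _

end FullRelation

theorem ZMod.two_mul_natCast_eq_of_modEq_two {a b : ℕ} (h : a ≡ b [MOD 2]) :
    (2 * a : ZMod 4) = 2 * b := by
  exact_mod_cast (ZMod.natCast_eq_natCast_iff _ _ 4).2 (h.mul_left' 2)

/-- If λ is odd and k ≡ 2 or 3 (mod 4), then no k-MOFS(2λ) satisfies a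
full relation. -/
theorem stmt_5 (lam k : ℕ) (hlam : Odd lam) (hk : k % 4 = 2 ∨ k % 4 = 3)
    (F : Fin k → Fin (2 * lam) → Fin (2 * lam) → Fin 2)
    (hmofs : IsMOFS (2 * lam) k F) :
    ¬ ∃ X1 X2 : Finset (Fin (2 * lam)), FullRelation (2 * lam) k F X1 X2 := by
  rintro ⟨X1, X2, hrel⟩
  have hpos : 0 < 2 * lam := by have := hlam.pos; omega
  have hsq := hrel.sum_sum_sq_modEq
  rw [hmofs.sum_sum_sq_sum, sum_sum_sq_ite_mem_add_ite_mem] at hsq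
  have ha := hrel.mul_modEq_card_left hmofs.1 (even_two_mul lam) ⟨0, hpos⟩
  have hb := hrel.mul_modEq_card_right hmofs.1 (even_two_mul lam) ⟨0, hpos⟩
  have hl : lam ≡ 1 [MOD 2] := Nat.odd_iff.mp hlam
  have hhalf : 2 * lam / 2 = lam := by omega
  have hquarter : (2 * lam) ^ 2 / 4 = lam ^ 2 := by rw [mul_pow]; norm_num
  rw [hhalf, hquarter, Fintype.card_fin] at hsq
  rw [hhalf] at ha hb
  have hk4 : (k : ZMod 4) = 2 ∨ (k : ZMod 4) = 3 := by
    rcases hk with h | h <;> [left; right] <;> rw [← ZMod.natCast_mod, h] <;> rfl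
  have hsq4 := (ZMod.natCast_eq_natCast_iff _ _ _).2 hsq
  push_cast [Nat.cast_sub (show 1 ≤ k by omega)] at hsq4
  have hmod4 : ∀ k l a b : ZMod 4, (k = 2 ∨ k = 3) → 2 * l = 2 → 2 * (k * l) = 2 * a →
      2 * (k * l) = 2 * b →
      k * (2 * l * l) + k * (k - 1) * l ^ 2 ≠ 2 * l * a + 2 * l * b + 2 * a * b := by
    decide
  exact hmod4 _ _ _ _ hk4
    (by exact_mod_cast ZMod.two_mul_natCast_eq_of_modEq_two hl)
    (by exact_mod_cast ZMod.two_mul_natCast_eq_of_modEq_two ha)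
    (by exact_mod_cast ZMod.two_mul_natCast_eq_of_modEq_two hb) hsq4
end

section
/- If two orthogonal binary frequency squares of order 2λ satisfy a full relation with row set X_1 and column set X_2, then |X_1| = λ or |X_2| = λ, and both |X_1| and |X_2| (and λ) are even. -/
/-!
Summing the parity condition of the full relation along a row gives
`|X₂| + 2λ[r ∈ X₁] + λ + λ ≡ 0 (mod 2)`, so `|X₂|` is even; columns give the same for `|X₁|`.
For two squares the relation says that `F₀` and `F₁` disagree exactly on the cells `(r, c)`
with `[r ∈ X₁] ≠ [c ∈ X₂]`. Orthogonality makes the number of such cells `2λ²`, while it is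
also `a(2λ - b) + (2λ - a)b` with `a = |X₁|`, `b = |X₂|`; hence `(λ - a)(λ - b) = 0`.
-/

open Finset

lemma sum_val_eq_card_filter_eq_one {ι : Type*} [Fintype ι] (f : ι → Fin 2) :
    ∑ i, (f i : ℕ) = #{i | f i = 1} := by
  rw [card_filter]
  refine sum_congr rfl fun i _ => ?_
  generalize f i = x
  fin_cases x <;> rfl

namespace IsFreqSquare

variable {n : ℕ} {F : Fin n → Fin n → Fin 2}

lemma transpose (hF : IsFreqSquare n F) : IsFreqSquare n fun r c => F c r :=
  ⟨hF.2, hF.1⟩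

lemma sum_row_s10 (hF : IsFreqSquare n F) (r : Fin n) : ∑ c, (F r c : ℕ) = n / 2 := by
  rw [sum_val_eq_card_filter_eq_one, hF.1 r]

end IsFreqSquare

namespace OrthFS

lemma card_filter_ne {n : ℕ} {F G : Fin n → Fin n → Fin 2} (h : OrthFS n F G) :
    #{p : Fin n × Fin n | F p.1 p.2 ≠ G p.1 p.2} = 2 * (n ^ 2 / 4) := by
  have hsplit : ({p | F p.1 p.2 ≠ G p.1 p.2} : Finset (Fin n × Fin n)) =
      ({p | F p.1 p.2 = 0 ∧ G p.1 p.2 = 1} : Finset (Fin n × Fin n)) ∪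
        ({p | F p.1 p.2 = 1 ∧ G p.1 p.2 = 0} : Finset (Fin n × Fin n)) := by
    rw [← filter_or]
    refine filter_congr fun p _ => ?_
    generalize F p.1 p.2 = x, G p.1 p.2 = y
    fin_cases x <;> fin_cases y <;> decide
  rw [hsplit, card_union_of_disjoint, h 0 1, h 1 0, two_mul]
  exact disjoint_filter.2 fun p _ h₀ h₁ => absurd (h₀.1.symm.trans h₁.1) (by decide)

end OrthFS

lemma card_filter_xor_mem {α β : Type*} [Fintype α] [Fintype β] [DecidableEq α]
    [DecidableEq β] (s : Finset α) (t : Finset β) :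
    #{p : α × β | Xor (p.1 ∈ s) (p.2 ∈ t)} = #s * #tᶜ + #sᶜ * #t := by
  have hsplit : ({p | Xor (p.1 ∈ s) (p.2 ∈ t)} : Finset (α × β)) = s ×ˢ tᶜ ∪ sᶜ ×ˢ t := by
    ext p
    rw [mem_filter]
    simp only [mem_univ, true_and, mem_union, mem_product, mem_compl, Xor]
    tauto
  rw [hsplit, card_union_of_disjoint, card_product, card_product]
  exact disjoint_product.2 (Or.inl disjoint_compl_right)

namespace FullRelation

variable {n k : ℕ} {F : Fin k → Fin n → Fin n → Fin 2} {X1 X2 : Finset (Fin n)}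

lemma transpose (h : FullRelation n k F X1 X2) :
    FullRelation n k (fun i r c => F i c r) X2 X1 := fun r c => by
  simpa only [add_comm (ite (r ∈ X2) _ _)] using h c r

lemma even_card_right (h : FullRelation n k F X1 X2) (hn : Even n) (hk : Even k)
    (hF : ∀ i, IsFreqSquare n (F i)) : Even #X2 := by
  rcases Nat.eq_zero_or_pos n with rfl | hpos
  · simp [eq_empty_of_isEmpty X2]
  let r : Fin n := ⟨0, hpos⟩
  have hrow : Even (∑ c, ((if r ∈ X1 then 1 else 0) + (if c ∈ X2 then 1 else 0) +
      ∑ i, (F i r c : ℕ))) := even_sum _ fun c _ => h r c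
  rw [sum_add_distrib, sum_add_distrib, sum_comm] at hrow
  simp only [(hF _).sum_row_s10, sum_const, card_univ, Fintype.card_fin, smul_eq_mul] at hrow
  rw [sum_boole, filter_mem_eq_inter, univ_inter, Nat.cast_id] at hrow
  have hsum : Even (n * (if r ∈ X1 then 1 else 0) + #X2) :=
    (Nat.even_add.1 hrow).2 (hk.mul_right _)
  exact (Nat.even_add.1 hsum).1 (hn.mul_right _)

lemma ne_iff_xor {F : Fin 2 → Fin n → Fin n → Fin 2} (h : FullRelation n 2 F X1 X2)
    (r c : Fin n) :
    F 0 r c ≠ F 1 r c ↔ Xor (r ∈ X1) (c ∈ X2) := by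
  have hrc := h r c
  rw [Fin.sum_univ_two] at hrc
  generalize F 0 r c = x, F 1 r c = y at hrc ⊢
  by_cases h1 : r ∈ X1 <;> by_cases h2 : c ∈ X2 <;>
    fin_cases x <;> fin_cases y <;> simp_all [Xor, Nat.even_iff]

end FullRelation

lemma eq_or_eq_of_mul_add_mul_eq {a a' b b' l : ℕ} (ha : a + a' = 2 * l) (hb : b + b' = 2 * l)
    (h : a * b' + a' * b = 2 * l ^ 2) : a = l ∨ b = l := by
  have hz : 2 * (((l : ℤ) - a) * ((l : ℤ) - b)) = 0 := by
    have ha' : (a' : ℤ) = 2 * l - a := by omega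
    have hb' : (b' : ℤ) = 2 * l - b := by omega
    have hz := congrArg (Nat.cast : ℕ → ℤ) h
    push_cast [ha', hb'] at hz
    linear_combination -hz
  rcases mul_eq_zero.1 ((mul_eq_zero.1 hz).resolve_left two_ne_zero) with h | h
  · exact Or.inl (by omega)
  · exact Or.inr (by omega)

/-- If two orthogonal binary frequency squares of order 2λ satisfy a full
relation (X1, X2), then |X1| = λ or |X2| = λ, and |X1|, |X2| and λ are all
even. -/
theorem stmt_10 (lam : ℕ)
    (F : Fin 2 → Fin (2 * lam) → Fin (2 * lam) → Fin 2)
    (hfs : ∀ i, IsFreqSquare (2 * lam) (F i))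
    (horth : OrthFS (2 * lam) (F 0) (F 1))
    (X1 X2 : Finset (Fin (2 * lam)))
    (hrel : FullRelation (2 * lam) 2 F X1 X2) :
    (X1.card = lam ∨ X2.card = lam) ∧
    Even X1.card ∧ Even X2.card ∧ Even lam := by
  have hX2 : Even #X2 := hrel.even_card_right (even_two_mul lam) even_two hfs
  have hX1 : Even #X1 :=
    hrel.transpose.even_card_right (even_two_mul lam) even_two fun i => (hfs i).transpose
  have hdisagree : #X1 * #X2ᶜ + #X1ᶜ * #X2 = 2 * lam ^ 2 := by
    rw [← card_filter_xor_mem]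
    simp only [← hrel.ne_iff_xor]
    rw [horth.card_filter_ne, mul_pow]
    norm_num
  have hcompl (X : Finset (Fin (2 * lam))) : #X + #Xᶜ = 2 * lam :=
    (card_add_card_compl X).trans (Fintype.card_fin _)
  have hkey := eq_or_eq_of_mul_add_mul_eq (hcompl X1) (hcompl X2) hdisagree
  exact ⟨hkey, hX1, hX2, hkey.elim (· ▸ hX1) (· ▸ hX2)⟩
end
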